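/- arXiv:0902.2925 — 6 statements merged into one kernel-verified Lean document; each statement's English description precedes it below -/
import Mathlib

section
/- Let G be a group-groupoid with group unit e ∈ G₀. The transitive (connected) component C_e(G) of e — consisting of all objects connected to e by some morphism of G, together with all morphisms between such objects — is a subgroup-groupoid of G whose object group C_e(G)₀ is a normal subgroup of G₀, and whose morphism group is a normal subgroup of the group of morphisms of G. -/
/-- A groupoid, given algebraically: a set of objects `O` and a set of morphisms `M`
with source, target, identity-assigning, (totalized) composition and inversion maps.
`comp b a` is the composite `b ∘ a`, only constrained when `src b = tgt a`. -/
structure Gpd (O M : Type) where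
  src : M → O
  tgt : M → O
  idm : O → M
  comp : M → M → M
  inv : M → M
  src_idm : ∀ x, src (idm x) = x
  tgt_idm : ∀ x, tgt (idm x) = x
  src_comp : ∀ b a, src b = tgt a → src (comp b a) = src a
  tgt_comp : ∀ b a, src b = tgt a → tgt (comp b a) = tgt b
  comp_assoc : ∀ c b a, src c = tgt b → src b = tgt a →
    comp c (comp b a) = comp (comp c b) a
  comp_idm : ∀ a, comp a (idm (src a)) = a
  idm_comp : ∀ a, comp (idm (tgt a)) a = a
  src_inv : ∀ a, src (inv a) = tgt a
  tgt_inv : ∀ a, tgt (inv a) = src a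
  inv_comp : ∀ a, comp (inv a) a = idm (src a)
  comp_inv : ∀ a, comp a (inv a) = idm (tgt a)

/-- A group-groupoid (a group object in groupoids): the objects and morphisms are
groups (written additively, not necessarily commutative) and the structure maps
are group homomorphisms; the interchange law holds. -/
structure GroupGpd (O M : Type) [AddGroup O] [AddGroup M] extends Gpd O M where
  src_add : ∀ a b, src (a + b) = src a + src b
  tgt_add : ∀ a b, tgt (a + b) = tgt a + tgt b
  idm_add : ∀ x y, idm (x + y) = idm x + idm y
  interchange : ∀ a b c d, src b = tgt a → src d = tgt c →
    comp b a + comp d c = comp (b + d) (a + c)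

/-- A morphism of group-groupoids: a functor between the underlying groupoids that is
a group homomorphism on morphisms and on objects. -/
structure GGHom {O M O' M' : Type} [AddGroup O] [AddGroup M] [AddGroup O'] [AddGroup M']
    (S : GroupGpd O M) (T : GroupGpd O' M') where
  f : M → M'
  f0 : O → O'
  map_src : ∀ a, T.src (f a) = f0 (S.src a)
  map_tgt : ∀ a, T.tgt (f a) = f0 (S.tgt a)
  map_idm : ∀ x, f (S.idm x) = T.idm (f0 x)
  map_comp : ∀ b a, S.src b = S.tgt a → f (S.comp b a) = T.comp (f b) (f a)
  map_add : ∀ a b, f (a + b) = f a + f b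
  map_add0 : ∀ x y, f0 (x + y) = f0 x + f0 y

/-- `p : H → G` is a covering morphism if it restricts to a bijection on each star. -/
def GGHom.IsCovering {O M O' M' : Type} [AddGroup O] [AddGroup M] [AddGroup O'] [AddGroup M']
    {S : GroupGpd O M} {T : GroupGpd O' M'} (p : GGHom S T) : Prop :=
  ∀ x : O, Set.BijOn p.f {a | S.src a = x} {b | T.src b = p.f0 x}

/-- The transitive component of the group unit `e = 0` in a
group-groupoid `G` is a subgroup-groupoid: its object set (all objects connected to
`0`) is a normal subgroup of `G₀`, its morphism set (all morphisms between such
objects) is a normal subgroup of the morphism group, and these sets are closed under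
the groupoid structure maps (identities, inverses, composition). -/
theorem stmt3 {O M : Type} [AddGroup O] [AddGroup M] (S : GroupGpd O M) :
    let CObj : Set O := {x | ∃ m : M, S.src m = x ∧ S.tgt m = 0}
    let CMor : Set M := {m | S.src m ∈ CObj ∧ S.tgt m ∈ CObj}
    (∃ N : AddSubgroup O, (N : Set O) = CObj ∧ N.Normal) ∧
    (∃ N' : AddSubgroup M, (N' : Set M) = CMor ∧ N'.Normal) ∧
    (∀ x ∈ CObj, S.idm x ∈ CMor) ∧
    (∀ m ∈ CMor, S.inv m ∈ CMor) ∧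
    (∀ b a, S.src b = S.tgt a → b ∈ CMor → a ∈ CMor → S.comp b a ∈ CMor) := by
  intro CObj CMor
  have src0 : S.src 0 = 0 := by
    have := S.src_add 0 0; rw [add_zero] at this
    exact (left_eq_add.mp this)
  have tgt0 : S.tgt 0 = 0 := by
    have := S.tgt_add 0 0; rw [add_zero] at this
    exact (left_eq_add.mp this)
  have src_neg : ∀ m : M, S.src (-m) = -(S.src m) := by
    intro m
    have h := S.src_add m (-m); rw [add_neg_cancel, src0] at h
    exact eq_neg_of_add_eq_zero_right h.symm
  have tgt_neg : ∀ m : M, S.tgt (-m) = -(S.tgt m) := by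
    intro m
    have h := S.tgt_add m (-m); rw [add_neg_cancel, tgt0] at h
    exact eq_neg_of_add_eq_zero_right h.symm
  have hzero : (0 : O) ∈ CObj := ⟨0, src0, tgt0⟩
  have hadd : ∀ x ∈ CObj, ∀ y ∈ CObj, x + y ∈ CObj := by
    rintro x ⟨m, hm, hm0⟩ y ⟨n, hn, hn0⟩
    exact ⟨m + n, by rw [S.src_add, hm, hn], by rw [S.tgt_add, hm0, hn0, add_zero]⟩
  have hneg : ∀ x ∈ CObj, -x ∈ CObj := by
    rintro x ⟨m, hm, hm0⟩
    exact ⟨-m, by rw [src_neg, hm], by rw [tgt_neg, hm0, neg_zero]⟩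
  have hconj : ∀ x ∈ CObj, ∀ g : O, g + x + -g ∈ CObj := by
    rintro x ⟨m, hm, hm0⟩ g
    refine ⟨S.idm g + m + S.idm (-g), ?_, ?_⟩
    · rw [S.src_add, S.src_add, S.src_idm, S.src_idm, hm]
    · rw [S.tgt_add, S.tgt_add, S.tgt_idm, S.tgt_idm, hm0, add_zero, add_neg_cancel]
  let N : AddSubgroup O :=
    { carrier := CObj
      zero_mem' := hzero
      add_mem' := fun {a b} ha hb => hadd a ha b hb
      neg_mem' := fun {a} ha => hneg a ha }
  let N' : AddSubgroup M :=
    { carrier := CMor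
      zero_mem' := ⟨src0 ▸ hzero, tgt0 ▸ hzero⟩
      add_mem' := fun {a b} ha hb =>
        ⟨S.src_add a b ▸ hadd _ ha.1 _ hb.1, S.tgt_add a b ▸ hadd _ ha.2 _ hb.2⟩
      neg_mem' := fun {a} ha =>
        ⟨src_neg a ▸ hneg _ ha.1, tgt_neg a ▸ hneg _ ha.2⟩ }
  refine ⟨⟨N, rfl, ⟨hconj⟩⟩, ⟨N', rfl, ⟨?_⟩⟩, ?_, ?_, ?_⟩
  · intro m hm g
    constructor
    · rw [S.src_add, S.src_add, src_neg]
      exact hconj _ hm.1 _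
    · rw [S.tgt_add, S.tgt_add, tgt_neg]
      exact hconj _ hm.2 _
  · intro x hx
    exact ⟨by rw [S.src_idm]; exact hx, by rw [S.tgt_idm]; exact hx⟩
  · intro m hm
    exact ⟨S.src_inv m ▸ hm.2, S.tgt_inv m ▸ hm.1⟩
  · intro b a h hb ha
    exact ⟨S.src_comp b a h ▸ ha.1, S.tgt_comp b a h ▸ hb.2⟩
end

section
/- Let p : H → G be a covering morphism of group-groupoids. Define, for a morphism a of G and an object x of H with α(a) = p₀(x), a·x := β(ã) where ã is the unique lift of a with source x. Then this defines an action of the group-groupoid G on the group H₀ via the group homomorphism p₀ : H₀ → G₀, satisfying all action axioms including the interchange law (b·y) + (a·x) = (b + a)·(y + x). -/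
/-- Let `p : H → G` be a covering morphism of group-groupoids and
let `ℓ a x` denote the unique lift of `a` with source `x` (for `α(a) = p₀(x)`).
Then `a · x := β(ℓ a x)` defines an action of the group-groupoid `G` on the group
`H₀` via the group homomorphism `p₀`, satisfying all action axioms including the
interchange law. -/
theorem stmt8 {OH MH OG MG : Type} [AddGroup OH] [AddGroup MH] [AddGroup OG] [AddGroup MG]
    {H : GroupGpd OH MH} {G : GroupGpd OG MG} (p : GGHom H G) (hp : p.IsCovering)
    (ℓ : MG → OH → MH)
    (hℓ : ∀ (a : MG) (x : OH), G.src a = p.f0 x → p.f (ℓ a x) = a ∧ H.src (ℓ a x) = x)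
    (huniq : ∀ (a : MG) (x : OH) (m : MH), G.src a = p.f0 x →
      p.f m = a → H.src m = x → m = ℓ a x) :
    let act : MG → OH → OH := fun a x => H.tgt (ℓ a x)
    (∀ x y : OH, p.f0 (x + y) = p.f0 x + p.f0 y) ∧
    (∀ (a : MG) (x : OH), G.src a = p.f0 x → p.f0 (act a x) = G.tgt a) ∧
    (∀ (a b : MG) (x : OH), G.src a = p.f0 x → G.src b = p.f0 (act a x) →
      act b (act a x) = act (G.comp b a) x) ∧
    (∀ x : OH, act (G.idm (p.f0 x)) x = x) ∧
    (∀ (a b : MG) (x y : OH), G.src a = p.f0 x → G.src b = p.f0 y →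
      act b y + act a x = act (b + a) (y + x)) := by
  intro act
  have htgt : ∀ (a : MG) (x : OH), G.src a = p.f0 x → p.f0 (act a x) = G.tgt a := by
    intro a x h
    show p.f0 (H.tgt (ℓ a x)) = G.tgt a
    rw [← p.map_tgt, (hℓ a x h).1]
  refine ⟨p.map_add0, htgt, ?_, ?_, ?_⟩
  · intro a b x ha hb
    have h1 := hℓ a x ha
    have h2 := hℓ b (act a x) hb
    have hba : G.src b = G.tgt a := by rw [hb, htgt a x ha]
    have hsrc : G.src (G.comp b a) = p.f0 x := by
      rw [G.src_comp b a hba, ha]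
    have hst : H.src (ℓ b (act a x)) = H.tgt (ℓ a x) := h2.2
    have key : H.comp (ℓ b (act a x)) (ℓ a x) = ℓ (G.comp b a) x := by
      apply huniq _ _ _ hsrc
      · rw [p.map_comp _ _ hst, h1.1, h2.1]
      · rw [H.src_comp _ _ hst, h1.2]
    simp only [act]
    rw [← key, H.tgt_comp _ _ hst]
  · intro x
    have key : H.idm x = ℓ (G.idm (p.f0 x)) x := by
      apply huniq
      · rw [G.src_idm]
      · rw [p.map_idm]
      · rw [H.src_idm]
    simp [act, ← key, H.tgt_idm]
  · intro a b x y ha hb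
    have h1 := hℓ a x ha
    have h2 := hℓ b y hb
    have hsrc : G.src (b + a) = p.f0 (y + x) := by
      rw [G.src_add, p.map_add0, ha, hb]
    have key : ℓ b y + ℓ a x = ℓ (b + a) (y + x) := by
      apply huniq _ _ _ hsrc
      · rw [p.map_add, h1.1, h2.1]
      · rw [H.src_add, h1.2, h2.2]
    simp only [act]
    rw [← key, H.tgt_add]
end

section
/- Let the group-groupoid G act on a group M via a group homomorphism w : M → G₀. Then the action groupoid G ⋉ M — with objects M, morphisms {(a,x) : α(a) = w(x)}, source (a,x) ↦ x, target (a,x) ↦ a·x, and composition (b, a·x) ∘ (a, x) = (b ∘ a, x) — becomes a group-groupoid under the operation (a,x) + (b,y) = (a+b, x+y), and the projection p : G ⋉ M → G, (a,x) ↦ a, is a covering morphism of group-groupoids. -/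
/-- The morphism group of the action groupoid `G ⋉ M`: the subgroup
`{(a,x) : α(a) = w(x)}` of `G × M`. -/
def actionSub {O MG M : Type} [AddGroup O] [AddGroup MG] [AddGroup M]
    (S : GroupGpd O MG) (w : M →+ O) : AddSubgroup (MG × M) where
  carrier := {q | S.src q.1 = w q.2}
  zero_mem' := by
    have h := S.src_add 0 0
    rw [add_zero] at h
    have h0 : S.src (0 : MG) = 0 := left_eq_add.mp h
    simp [h0]
  add_mem' := by
    intro a b ha hb
    simp only [Set.mem_setOf_eq] at *
    show S.src (a.1 + b.1) = w (a.2 + b.2)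
    rw [S.src_add, ha, hb, map_add]
  neg_mem' := by
    intro a ha
    simp only [Set.mem_setOf_eq] at *
    have h : S.src (-a.1) + S.src a.1 = 0 := by
      rw [← S.src_add, neg_add_cancel]
      have h2 := S.src_add 0 0
      rw [add_zero] at h2
      exact (left_eq_add.mp h2)
    have : S.src (-a.1) = -S.src a.1 := eq_neg_of_add_eq_zero_left h
    show S.src (-a.1) = w (-a.2)
    rw [this, ha, map_neg]

/-!
Every groupoid law of `G ⋉ M` holds because it holds in the first component, where it is the
corresponding law of `G`; the action axioms are exactly what makes sources and targets match up,
and the interchange law of the action makes the target map additive. A morphism in the star of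
`x` is determined by its first component, which may be any `a` with `α(a) = w(x)`, so the
projection is bijective on stars.
-/

structure GroupGpdAction {O MG M : Type} [AddGroup O] [AddGroup MG] [AddGroup M]
    (S : GroupGpd O MG) (w : M →+ O) where
  act : MG → M → M
  w_act : ∀ a x, S.src a = w x → w (act a x) = S.tgt a
  act_act : ∀ a b x, S.src a = w x → S.src b = w (act a x) →
    act b (act a x) = act (S.comp b a) x
  act_idm : ∀ x, act (S.idm (w x)) x = x
  act_add_act : ∀ a b x y, S.src a = w x → S.src b = w y →
    act b y + act a x = act (b + a) (y + x)

section

variable {O MG M : Type} [AddGroup O] [AddGroup MG] [AddGroup M] {S : GroupGpd O MG}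
  {w : M →+ O}

theorem src_fst_actionSub (q : actionSub S w) : S.src q.1.1 = w q.1.2 := q.2

theorem mem_actionSub {q : MG × M} : q ∈ actionSub S w ↔ S.src q.1 = w q.2 := Iff.rfl

def actionSub.idm (x : M) : actionSub S w :=
  ⟨(S.idm (w x), x), mem_actionSub.2 (S.src_idm _)⟩

namespace GroupGpdAction

variable (A : GroupGpdAction S w)

theorem src_eq_tgt_of_composable {a b : actionSub S w} (h : b.1.2 = A.act a.1.1 a.1.2) :
    S.src b.1.1 = S.tgt a.1.1 := by
  rw [src_fst_actionSub, h, A.w_act _ _ a.2]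

theorem act_inv_act {a : MG} {x : M} (h : S.src a = w x) : A.act (S.inv a) (A.act a x) = x := by
  have hinv : S.src (S.inv a) = w (A.act a x) := (S.src_inv a).trans (A.w_act a x h).symm
  rw [A.act_act a _ x h hinv, S.inv_comp, h, A.act_idm]

def inv (q : actionSub S w) : actionSub S w :=
  ⟨(S.inv q.1.1, A.act q.1.1 q.1.2),
    mem_actionSub.2 <| (S.src_inv _).trans (A.w_act _ _ q.2).symm⟩

open Classical in
noncomputable def comp (b a : actionSub S w) : actionSub S w :=
  if h : b.1.2 = A.act a.1.1 a.1.2 then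
    ⟨(S.comp b.1.1 a.1.1, a.1.2),
      mem_actionSub.2 <| (S.src_comp _ _ (A.src_eq_tgt_of_composable h)).trans a.2⟩
  else a

theorem comp_of_composable {b a : actionSub S w} (h : b.1.2 = A.act a.1.1 a.1.2) :
    (A.comp b a : MG × M) = (S.comp b.1.1 a.1.1, a.1.2) := by
  rw [comp, dif_pos h]

theorem act_comp {b a : actionSub S w} (h : b.1.2 = A.act a.1.1 a.1.2) :
    A.act (A.comp b a).1.1 (A.comp b a).1.2 = A.act b.1.1 b.1.2 := by
  rw [A.comp_of_composable h, h, A.act_act _ _ _ a.2 (by rw [← h]; exact b.2)]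

theorem add_composable {a b c d : actionSub S w} (hba : b.1.2 = A.act a.1.1 a.1.2)
    (hdc : d.1.2 = A.act c.1.1 c.1.2) :
    (b + d).1.2 = A.act (a + c).1.1 (a + c).1.2 := by
  change b.1.2 + d.1.2 = A.act (a.1.1 + c.1.1) (a.1.2 + c.1.2)
  rw [hba, hdc, A.act_add_act _ _ _ _ c.2 a.2]

noncomputable def groupGpd : GroupGpd M (actionSub S w) where
  src q := q.1.2
  tgt q := A.act q.1.1 q.1.2
  idm := actionSub.idm
  comp := A.comp
  inv := A.inv
  src_idm _ := rfl
  tgt_idm := A.act_idm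
  src_comp _ _ h := (congrArg Prod.snd (A.comp_of_composable h) :)
  tgt_comp _ _ h := A.act_comp h
  comp_assoc c b a hcb hba := by
    have hcba : c.1.2 = A.act (A.comp b a).1.1 (A.comp b a).1.2 := hcb.trans (A.act_comp hba).symm
    have hcb_a : (A.comp c b).1.2 = A.act a.1.1 a.1.2 := by
      rw [A.comp_of_composable hcb]; exact hba
    apply Subtype.ext
    rw [A.comp_of_composable hcba, A.comp_of_composable hcb_a, A.comp_of_composable hba,
      A.comp_of_composable hcb,
      S.comp_assoc _ _ _ (A.src_eq_tgt_of_composable hcb) (A.src_eq_tgt_of_composable hba)]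
  comp_idm a := by
    apply Subtype.ext
    rw [A.comp_of_composable (A.act_idm _).symm]
    change (S.comp a.1.1 (S.idm (w a.1.2)), a.1.2) = a.1
    rw [← src_fst_actionSub a, S.comp_idm]
  idm_comp a := by
    apply Subtype.ext
    rw [A.comp_of_composable rfl]
    change (S.comp (S.idm (w (A.act a.1.1 a.1.2))) a.1.1, a.1.2) = a.1
    rw [A.w_act _ _ a.2, S.idm_comp]
  src_inv _ := rfl
  tgt_inv a := A.act_inv_act a.2
  inv_comp a := by
    apply Subtype.ext
    rw [A.comp_of_composable rfl]
    change (S.comp (S.inv a.1.1) a.1.1, a.1.2) = (S.idm (w a.1.2), a.1.2)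
    rw [S.inv_comp, src_fst_actionSub]
  comp_inv a := by
    apply Subtype.ext
    rw [A.comp_of_composable (A.act_inv_act a.2).symm]
    change (S.comp a.1.1 (S.inv a.1.1), A.act a.1.1 a.1.2) =
      (S.idm (w (A.act a.1.1 a.1.2)), A.act a.1.1 a.1.2)
    rw [S.comp_inv, A.w_act _ _ a.2]
  src_add _ _ := rfl
  tgt_add a b := (A.act_add_act _ _ _ _ b.2 a.2).symm
  idm_add x y := by
    apply Subtype.ext
    change (S.idm (w (x + y)), x + y) = (S.idm (w x) + S.idm (w y), x + y)
    rw [map_add, S.idm_add]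
  interchange a b c d hba hdc := by
    apply Subtype.ext
    change (A.comp b a : MG × M) + A.comp d c = A.comp (b + d) (a + c)
    rw [A.comp_of_composable hba, A.comp_of_composable hdc,
      A.comp_of_composable (A.add_composable hba hdc), Prod.mk_add_mk,
      S.interchange _ _ _ _ (A.src_eq_tgt_of_composable hba) (A.src_eq_tgt_of_composable hdc)]
    rfl

noncomputable def proj : GGHom A.groupGpd S where
  f q := q.1.1
  f0 := w
  map_src q := q.2
  map_tgt q := (A.w_act _ _ q.2).symm
  map_idm _ := rfl
  map_comp _ _ h := congrArg Prod.fst (A.comp_of_composable h)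
  map_add _ _ := rfl
  map_add0 := map_add w

theorem proj_isCovering : A.proj.IsCovering := by
  intro x
  refine ⟨fun q (hq : q.1.2 = x) => ?_, fun q (hq : q.1.2 = x) q' (hq' : q'.1.2 = x) hqq' => ?_,
    fun a (ha : S.src a = w x) => ⟨⟨(a, x), ha⟩, rfl, rfl⟩⟩
  · change S.src q.1.1 = w x
    rw [src_fst_actionSub, hq]
  · exact Subtype.ext (Prod.ext hqq' (hq.trans hq'.symm))

end GroupGpdAction

end

/-- If a group-groupoid `G` acts on a group `M` via a group
homomorphism `w : M → G₀`, then the action groupoid `G ⋉ M` — objects `M`,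
morphisms `{(a,x) : α(a) = w(x)}`, source `(a,x) ↦ x`, target `(a,x) ↦ a·x`,
composition `(b, a·x) ∘ (a,x) = (b ∘ a, x)`, identities `x ↦ (1_{w(x)}, x)` —
is a group-groupoid under componentwise addition `(a,x)+(b,y) = (a+b, x+y)`
(the subgroup structure of `G × M`), and the projection `(a,x) ↦ a` is a
covering morphism of group-groupoids over `w`. -/
theorem stmt9 {O MG M : Type} [AddGroup O] [AddGroup MG] [AddGroup M]
    (S : GroupGpd O MG) (w : M →+ O) (act : MG → M → M)
    (hw : ∀ (a : MG) (x : M), S.src a = w x → w (act a x) = S.tgt a)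
    (hcomp : ∀ (a b : MG) (x : M), S.src a = w x → S.src b = w (act a x) →
      act b (act a x) = act (S.comp b a) x)
    (hid : ∀ x : M, act (S.idm (w x)) x = x)
    (hinter : ∀ (a b : MG) (x y : M), S.src a = w x → S.src b = w y →
      act b y + act a x = act (b + a) (y + x)) :
    ∃ (T : GroupGpd M ↥(actionSub S w)) (π : GGHom T S),
      (∀ q : ↥(actionSub S w), T.src q = q.1.2) ∧
      (∀ q : ↥(actionSub S w), T.tgt q = act q.1.1 q.1.2) ∧
      (∀ x : M, T.idm x = ⟨(S.idm (w x), x), (S.src_idm (w x) : _)⟩) ∧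
      (∀ (a b : MG) (x : M) (ha : S.src a = w x) (hb : S.src b = w (act a x)),
        T.comp ⟨(b, act a x), hb⟩ ⟨(a, x), ha⟩ =
          ⟨(S.comp b a, x), (S.src_comp b a (hb.trans (hw a x ha))).trans ha⟩) ∧
      π.f = (fun q : ↥(actionSub S w) => q.1.1) ∧
      π.f0 = ⇑w ∧
      π.IsCovering := by
  let A : GroupGpdAction S w := ⟨act, hw, hcomp, hid, hinter⟩
  exact ⟨A.groupGpd, A.proj, fun _ => rfl, fun _ => rfl, fun _ => rfl,
    fun _ _ _ _ _ => Subtype.ext (A.comp_of_composable rfl), rfl, rfl, A.proj_isCovering⟩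
end

section
/- Let p : H → G be a covering morphism of group-groupoids and let the associated action of G on H₀ be a·x = β(ã) (target of the unique lift ã of a at x). Then the map T_p : H → G ⋉ H₀ given by h ↦ (p(h), α(h)) is an isomorphism of group-groupoids over G, i.e., it is a bijective group-groupoid morphism with pr₁ ∘ T_p = p, with inverse (a,x) ↦ ã. -/
/-!
A covering morphism is injective on each star, so a morphism `h` of `H` is determined by
the pair `(p h, α h)`; the lift `ℓ` provides a preimage of every pair, so `T_p` is a
bijection with inverse `ℓ`. Additivity and functoriality of `T_p` hold componentwise,
since both `p` and `α` are additive and `p` is a functor.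
-/

namespace GGHom

variable {OH MH OG MG : Type} [AddGroup OH] [AddGroup MH] [AddGroup OG] [AddGroup MG]
  {H : GroupGpd OH MH} {G : GroupGpd OG MG}

def toActionSub (p : GGHom H G) (w : OH →+ OG) (hw0 : ⇑w = p.f0) (h : MH) :
    actionSub G w :=
  ⟨(p.f h, H.src h), (p.map_src h).trans (congrFun hw0 (H.src h)).symm⟩

variable {p : GGHom H G}

theorem IsCovering.eq_of_map_eq_of_src_eq (hp : p.IsCovering) {h h' : MH}
    (hf : p.f h = p.f h') (hs : H.src h = H.src h') : h = h' :=
  (hp (H.src h')).injOn hs rfl hf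

theorem IsCovering.lift_map_src (hp : p.IsCovering) {ℓ : MG → OH → MH}
    (hℓ : ∀ a x, G.src a = p.f0 x → p.f (ℓ a x) = a ∧ H.src (ℓ a x) = x) (h : MH) :
    ℓ (p.f h) (H.src h) = h :=
  have hlift := hℓ (p.f h) (H.src h) (p.map_src h)
  hp.eq_of_map_eq_of_src_eq hlift.1 hlift.2

variable (w : OH →+ OG) (hw0 : ⇑w = p.f0)

theorem IsCovering.toActionSub_injective (hp : p.IsCovering) :
    Function.Injective (p.toActionSub w hw0) := fun _ _ he =>
  hp.eq_of_map_eq_of_src_eq (congrArg (·.1.1) he) (congrArg (·.1.2) he)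

theorem toActionSub_lift {ℓ : MG → OH → MH}
    (hℓ : ∀ a x, G.src a = p.f0 x → p.f (ℓ a x) = a ∧ H.src (ℓ a x) = x)
    (q : actionSub G w) : p.toActionSub w hw0 (ℓ q.1.1 q.1.2) = q :=
  have hq : G.src q.1.1 = p.f0 q.1.2 := hw0 ▸ q.2
  Subtype.ext (Prod.ext (hℓ _ _ hq).1 (hℓ _ _ hq).2)

theorem toActionSub_add (h h' : MH) :
    p.toActionSub w hw0 (h + h') = p.toActionSub w hw0 h + p.toActionSub w hw0 h' :=
  Subtype.ext (Prod.ext (p.map_add h h') (H.src_add h h'))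

theorem coe_toActionSub_idm (x : OH) :
    (p.toActionSub w hw0 (H.idm x) : MG × OH) = (G.idm (w x), x) :=
  Prod.ext ((p.map_idm x).trans (hw0 ▸ rfl)) (H.src_idm x)

theorem coe_toActionSub_comp {b a : MH} (hba : H.src b = H.tgt a) :
    (p.toActionSub w hw0 (H.comp b a) : MG × OH) = (G.comp (p.f b) (p.f a), H.src a) :=
  Prod.ext (p.map_comp b a hba) (H.src_comp b a hba)

end GGHom

open GGHom

/-- Let `p : H → G` be a covering morphism of group-groupoids,
`ℓ a x` the unique lift of `a` at `x`, and `a · x := β(ℓ a x)` the induced action.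
Then `T_p : H → G ⋉ H₀`, `h ↦ (p(h), α(h))`, is an isomorphism of group-groupoids
over `G`: it is bijective, additive, preserves source, target, identities and
composition, satisfies `pr₁ ∘ T_p = p`, and has inverse `(a,x) ↦ ℓ a x`. -/
theorem stmt11 {OH MH OG MG : Type} [AddGroup OH] [AddGroup MH] [AddGroup OG] [AddGroup MG]
    {H : GroupGpd OH MH} {G : GroupGpd OG MG} (p : GGHom H G) (hp : p.IsCovering)
    (w : OH →+ OG) (hw0 : ⇑w = p.f0)
    (ℓ : MG → OH → MH)
    (hℓ : ∀ (a : MG) (x : OH), G.src a = p.f0 x → p.f (ℓ a x) = a ∧ H.src (ℓ a x) = x) :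
    let act : MG → OH → OH := fun a x => H.tgt (ℓ a x)
    let T : MH → ↥(actionSub G w) := fun h =>
      ⟨(p.f h, H.src h), (p.map_src h).trans (congrFun hw0 (H.src h)).symm⟩
    Function.Bijective T ∧
    (∀ h h' : MH, T (h + h') = T h + T h') ∧
    (∀ h : MH, (T h).1.1 = p.f h) ∧
    (∀ h : MH, (T h).1.2 = H.src h) ∧
    (∀ h : MH, act (p.f h) (H.src h) = H.tgt h) ∧
    (∀ x : OH, T (H.idm x) = ⟨(G.idm (w x), x), (G.src_idm (w x) : _)⟩) ∧
    (∀ b a : MH, ∀ hba : H.src b = H.tgt a,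
      T (H.comp b a) =
        ⟨(G.comp (p.f b) (p.f a), H.src a), by
          have hcb : G.src (p.f b) = G.tgt (p.f a) := by
            rw [p.map_src, p.map_tgt, hba]
          show G.src (G.comp (p.f b) (p.f a)) = w (H.src a)
          rw [G.src_comp _ _ hcb, p.map_src, hw0]⟩) ∧
    (∀ q : ↥(actionSub G w),
      T (ℓ q.1.1 q.1.2) = q) ∧
    (∀ h : MH, ℓ (p.f h) (H.src h) = h) := by
  intro act T
  have hret := hp.lift_map_src hℓ
  exact ⟨⟨hp.toActionSub_injective w hw0, fun q => ⟨_, toActionSub_lift w hw0 hℓ q⟩⟩,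
    toActionSub_add w hw0, fun _ => rfl, fun _ => rfl, fun h => congrArg H.tgt (hret h),
    fun x => Subtype.ext (coe_toActionSub_idm w hw0 x),
    fun _ _ hba => Subtype.ext (coe_toActionSub_comp w hw0 hba),
    toActionSub_lift w hw0 hℓ, hret⟩
end

section
/- Let X be a topological group with multiplication m : X × X → X. Then the fundamental groupoid π₁X is a group-groupoid: the induced functor π₁m : π₁(X × X) ≅ π₁X × π₁X → π₁X makes the morphism set of π₁X a group (via [a] + [b] = [m ∘ (a,b)]) for which source, target, identity and composition are group homomorphisms, and the interchange law ([b] ∘ [a]) + ([d] ∘ [c]) = ([b] + [d]) ∘ ([a] + [c]) holds. -/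
/-- Pointwise sum of two paths in a topological additive group. -/
def pathAdd {X : Type} [TopologicalSpace X] [Add X] [ContinuousAdd X]
    {x y x' y' : X} (a : Path x y) (b : Path x' y') : Path (x + x') (y + y') where
  toFun t := a t + b t
  continuous_toFun := by fun_prop
  source' := by simp
  target' := by simp

@[simp]
theorem pathAdd_apply {X : Type} [TopologicalSpace X] [Add X] [ContinuousAdd X]
    {x y x' y' : X} (a : Path x y) (b : Path x' y') (t : unitInterval) :
    pathAdd a b t = a t + b t :=
  rfl

theorem Path.Homotopic.add {X : Type} [TopologicalSpace X] [Add X] [ContinuousAdd X]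
    {x y x' y' : X} {a₀ a₁ : Path x y} {b₀ b₁ : Path x' y'}
    (ha : a₀.Homotopic a₁) (hb : b₀.Homotopic b₁) :
    (pathAdd a₀ b₀).Homotopic (pathAdd a₁ b₁) :=
  Path.Homotopic.map (Nonempty.map2 Path.Homotopic.prodHomotopy ha hb)
    ⟨fun z => z.1 + z.2, continuous_add⟩

theorem pathAdd_trans {X : Type} [TopologicalSpace X] [Add X] [ContinuousAdd X]
    {x y z x' y' z' : X} (a : Path x y) (b : Path y z) (c : Path x' y') (d : Path y' z') :
    pathAdd (a.trans b) (c.trans d) = (pathAdd a c).trans (pathAdd b d) := by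
  ext t
  simp only [pathAdd_apply, Path.trans_apply]
  split_ifs <;> rfl

namespace Path.Homotopic.Quotient

variable {X : Type} [TopologicalSpace X] [Add X] [ContinuousAdd X]

def add {x y x' y' : X} (p : Path.Homotopic.Quotient x y) (q : Path.Homotopic.Quotient x' y') :
    Path.Homotopic.Quotient (x + x') (y + y') :=
  _root_.Quotient.map₂ pathAdd (fun _ _ ha _ _ hb => Path.Homotopic.add ha hb) p q

theorem trans_add_trans {x y z x' y' z' : X} (p : Path.Homotopic.Quotient x y)
    (q : Path.Homotopic.Quotient y z) (r : Path.Homotopic.Quotient x' y')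
    (s : Path.Homotopic.Quotient y' z') :
    add (p.trans q) (r.trans s) = (add p r).trans (add q s) := by
  induction p, r using Path.Homotopic.Quotient.ind₂ with | mk a c =>
  induction q, s using Path.Homotopic.Quotient.ind₂ with | mk b d =>
  exact congrArg mk (pathAdd_trans a b c d)

end Path.Homotopic.Quotient

open Path.Homotopic.Quotient

abbrev PathClass (X : Type) [TopologicalSpace X] := Σ x y : X, Path.Homotopic.Quotient x y

namespace PathClass

variable {X : Type} [TopologicalSpace X]

theorem mk_eq_mk_of_apply_eq {x y x' y' : X} (a : Path x y) (b : Path x' y')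
    (h : ∀ t, a t = b t) : (⟨x, y, mk a⟩ : PathClass X) = ⟨x', y', mk b⟩ := by
  obtain rfl : x = x' := by simpa using h 0
  obtain rfl : y = y' := by simpa using h 1
  obtain rfl : a = b := Path.ext (funext h)
  rfl

open Classical in
noncomputable def comp (b a : PathClass X) : PathClass X :=
  if h : a.2.1 = b.1 then ⟨a.1, b.2.1, a.2.2.trans (b.2.2.cast h rfl)⟩ else b

theorem comp_mk {x y z : X} (p : Path.Homotopic.Quotient x y) (q : Path.Homotopic.Quotient y z) :
    comp ⟨y, z, q⟩ ⟨x, y, p⟩ = ⟨x, z, p.trans q⟩ := by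
  rw [comp, dif_pos rfl]
  dsimp only
  rw [cast_rfl_rfl]

variable (X) in
noncomputable def fundamentalGpd : Gpd X (PathClass X) where
  src σ := σ.1
  tgt σ := σ.2.1
  idm x := ⟨x, x, refl x⟩
  comp := comp
  inv σ := ⟨σ.2.1, σ.1, σ.2.2.symm⟩
  src_idm _ := rfl
  tgt_idm _ := rfl
  src_comp := by
    rintro ⟨_, _, q⟩ ⟨_, _, p⟩ rfl
    rw [comp_mk]
  tgt_comp := by
    rintro ⟨_, _, q⟩ ⟨_, _, p⟩ rfl
    rw [comp_mk]
  comp_assoc := by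
    rintro ⟨_, _, r⟩ ⟨_, _, q⟩ ⟨_, _, p⟩ rfl rfl
    rw [comp_mk, comp_mk, comp_mk, comp_mk, trans_assoc]
  comp_idm := by
    rintro ⟨_, _, p⟩
    rw [comp_mk, refl_trans]
  idm_comp := by
    rintro ⟨_, _, p⟩
    rw [comp_mk, trans_refl]
  src_inv _ := rfl
  tgt_inv _ := rfl
  inv_comp := by
    rintro ⟨_, _, p⟩
    rw [comp_mk, trans_symm]
  comp_inv := by
    rintro ⟨_, _, p⟩
    rw [comp_mk, symm_trans]

noncomputable instance [Add X] [ContinuousAdd X] : Add (PathClass X) :=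
  ⟨fun σ τ => ⟨σ.1 + τ.1, σ.2.1 + τ.2.1, σ.2.2.add τ.2.2⟩⟩

instance [Zero X] : Zero (PathClass X) :=
  ⟨⟨0, 0, refl 0⟩⟩

noncomputable instance [Neg X] [ContinuousNeg X] : Neg (PathClass X) :=
  ⟨fun σ => ⟨-σ.1, -σ.2.1, σ.2.2.map ⟨Neg.neg, continuous_neg⟩⟩⟩

theorem mk_add_mk [Add X] [ContinuousAdd X] {x y x' y' : X} (p : Path.Homotopic.Quotient x y)
    (q : Path.Homotopic.Quotient x' y') :
    (⟨x, y, p⟩ + ⟨x', y', q⟩ : PathClass X) = ⟨x + x', y + y', p.add q⟩ :=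
  rfl

theorem comp_add_comp [Add X] [ContinuousAdd X] {x y z x' y' z' : X}
    (p : Path.Homotopic.Quotient x y) (q : Path.Homotopic.Quotient y z)
    (r : Path.Homotopic.Quotient x' y') (s : Path.Homotopic.Quotient y' z') :
    comp ⟨y, z, q⟩ ⟨x, y, p⟩ + comp ⟨y', z', s⟩ ⟨x', y', r⟩ =
      comp (⟨y, z, q⟩ + ⟨y', z', s⟩) (⟨x, y, p⟩ + ⟨x', y', r⟩ : PathClass X) := by
  rw [comp_mk, comp_mk, mk_add_mk, mk_add_mk, mk_add_mk, comp_mk, trans_add_trans]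

variable [AddGroup X] [IsTopologicalAddGroup X]

protected theorem add_assoc (σ τ ρ : PathClass X) : σ + τ + ρ = σ + (τ + ρ) := by
  obtain ⟨_, _, ⟨a⟩⟩ := σ
  obtain ⟨_, _, ⟨b⟩⟩ := τ
  obtain ⟨_, _, ⟨c⟩⟩ := ρ
  exact mk_eq_mk_of_apply_eq _ _ fun t => add_assoc (a t) (b t) (c t)

protected theorem zero_add (σ : PathClass X) : 0 + σ = σ := by
  obtain ⟨_, _, ⟨a⟩⟩ := σ
  exact mk_eq_mk_of_apply_eq _ _ fun t => zero_add (a t)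

protected theorem neg_add_cancel (σ : PathClass X) : -σ + σ = 0 := by
  obtain ⟨_, _, ⟨a⟩⟩ := σ
  exact mk_eq_mk_of_apply_eq _ _ fun t => neg_add_cancel (a t)

noncomputable instance : AddGroup (PathClass X) :=
  AddGroup.ofLeftAxioms PathClass.add_assoc PathClass.zero_add PathClass.neg_add_cancel

variable (X) in
noncomputable def fundamentalGroupGpd : GroupGpd X (PathClass X) :=
  { fundamentalGpd X with
    src_add := fun _ _ => rfl
    tgt_add := fun _ _ => rfl
    idm_add := fun _ _ => rfl
    interchange := by
      rintro ⟨_, _, p⟩ ⟨_, _, q⟩ ⟨_, _, r⟩ ⟨_, _, s⟩ rfl rfl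
      exact comp_add_comp p q r s }

end PathClass

/-- Let `X` be a topological group (written additively, with
continuous addition `m`). Then the fundamental groupoid `π₁X` is a group-groupoid:
its morphism set `Σ x y, Path.Homotopic.Quotient x y` carries a group structure,
induced by `π₁m` on path classes by pointwise addition (`[a] + [b] = [m ∘ (a,b)]`),
giving a group-groupoid whose source, target, identities and composition are those
of the fundamental groupoid (in particular these are group homomorphisms and the
interchange law holds, since these are the `GroupGpd` axioms). -/
theorem stmt13 (X : Type) [AddGroup X] [TopologicalSpace X] [IsTopologicalAddGroup X] :
    ∃ (iM : AddGroup (Σ x y : X, Path.Homotopic.Quotient x y))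
      (S : @GroupGpd X (Σ x y : X, Path.Homotopic.Quotient x y) _ iM),
      S.src = (fun σ => σ.1) ∧
      S.tgt = (fun σ => σ.2.1) ∧
      S.idm = (fun x => ⟨x, x, ⟦Path.refl x⟧⟩) ∧
      (∀ (x y z : X) (c₁ : Path.Homotopic.Quotient x y) (c₂ : Path.Homotopic.Quotient y z),
        S.comp ⟨y, z, c₂⟩ ⟨x, y, c₁⟩ = ⟨x, z, c₁.trans c₂⟩) ∧
      (∀ (x y x' y' : X) (a : Path x y) (b : Path x' y'),
        iM.add ⟨x, y, ⟦a⟧⟩ ⟨x', y', ⟦b⟧⟩ = ⟨x + x', y + y', ⟦pathAdd a b⟧⟩) :=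
  ⟨inferInstance, PathClass.fundamentalGroupGpd X, rfl, rfl, rfl,
    fun _ _ _ => PathClass.comp_mk, fun _ _ _ _ a b => PathClass.mk_add_mk ⟦a⟧ ⟦b⟧⟩
end

section
/- Let p : X̃ → X be a covering map of topological spaces that is also a homomorphism of topological groups. Then the induced morphism π₁p : π₁X̃ → π₁X is a covering morphism of group-groupoids: it is a group-groupoid morphism and for every x̃ ∈ X̃ the induced map St_{π₁X̃} x̃ → St_{π₁X} p(x̃) on stars of fundamental groupoids is a bijection. -/
theorem Path.Homotopic.Quotient.sigma_mk_cast {X : Type*} [TopologicalSpace X] {x y x' y' : X}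
    (γ : Path x y) (hx : x' = x) (hy : y' = y) :
    (⟨x', y', ⟦γ.cast hx hy⟧⟩ : Σ a b : X, Path.Homotopic.Quotient a b) = ⟨x, y, ⟦γ⟧⟩ := by
  subst hx hy
  rfl

theorem map_pathAdd {X' X : Type} {F : Type*} [TopologicalSpace X'] [Add X'] [ContinuousAdd X']
    [TopologicalSpace X] [Add X] [ContinuousAdd X] [FunLike F X' X] [AddHomClass F X' X]
    (f : F) (hf : Continuous f) {x y x' y' : X'} (a : Path x y) (b : Path x' y') :
    (pathAdd a b).map hf =
      (pathAdd (a.map hf) (b.map hf)).cast (map_add f x x') (map_add f y y') := by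
  ext t
  exact map_add f (a t) (b t)

theorem IsCoveringMap.bijective_map_star {E X : Type*} [TopologicalSpace E] [TopologicalSpace X]
    {p : E → X} (cov : IsCoveringMap p) (e : E) :
    Function.Bijective fun σ : Σ y : E, Path.Homotopic.Quotient e y =>
      (⟨p σ.1, σ.2.map ⟨p, cov.continuous⟩⟩ : Σ z : X, Path.Homotopic.Quotient (p e) z) := by
  constructor
  · rintro ⟨y₁, γ₁⟩ ⟨y₂, γ₂⟩ h
    have hy : y₁ = y₂ := by
      simpa only [cov.monodromy_map] using congrArg
        (fun σ : Σ z : X, Path.Homotopic.Quotient (p e) z => (cov.monodromy σ.2 ⟨e, rfl⟩ : E)) h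
    subst hy
    exact congrArg _ (cov.injective_path_homotopic_map e y₁ (eq_of_heq (Sigma.mk.inj h).2))
  · rintro ⟨z, γ⟩
    refine ⟨⟨_, cov.liftPathQuotient γ ⟨e, rfl⟩⟩, ?_⟩
    exact Sigma.ext (cov.monodromy γ ⟨e, rfl⟩).2
      ((heq_of_eq (cov.map_liftPathQuotient γ ⟨e, rfl⟩)).trans (Path.Homotopic.Quotient.cast_heq _ _))

/-- Let `p : X̃ → X` be a covering map of topological spaces that is
also a homomorphism of topological (additive) groups. Then `π₁p : π₁X̃ → π₁X` is a
covering morphism of group-groupoids: it is additive on path classes (a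
group-groupoid morphism) and for every `x̃` the induced map on stars
`St_{π₁X̃} x̃ → St_{π₁X} p(x̃)` is a bijection. -/
theorem stmt15 {X' X : Type} [AddGroup X'] [TopologicalSpace X'] [IsTopologicalAddGroup X']
    [AddGroup X] [TopologicalSpace X] [IsTopologicalAddGroup X]
    (p : X' →+ X) (hcont : Continuous p) (hcov : IsCoveringMap p) :
    let pc : C(X', X) := ⟨p, hcont⟩
    let F : (Σ x y : X', Path.Homotopic.Quotient x y) →
        (Σ x y : X, Path.Homotopic.Quotient x y) :=
      fun σ => ⟨p σ.1, p σ.2.1, Path.Homotopic.Quotient.map σ.2.2 pc⟩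
    -- π₁p is a morphism of group-groupoids (additivity on path classes):
    (∀ (x y x' y' : X') (a : Path x y) (b : Path x' y'),
      F ⟨x + x', y + y', ⟦pathAdd a b⟧⟩ =
        ⟨p x + p x', p y + p y', ⟦pathAdd (a.map hcont) (b.map hcont)⟧⟩) ∧
    -- π₁p is bijective on each star:
    (∀ x' : X',
      Function.Bijective
        (fun σ : Σ y : X', Path.Homotopic.Quotient x' y =>
          (⟨p σ.1, Path.Homotopic.Quotient.map σ.2 pc⟩ : Σ y : X, Path.Homotopic.Quotient (p x') y))) := by
  intro pc F
  refine ⟨fun x y x' y' a b => ?_, hcov.bijective_map_star⟩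
  show (⟨p (x + x'), p (y + y'), ⟦(pathAdd a b).map hcont⟧⟩ :
    Σ u v : X, Path.Homotopic.Quotient u v) = _
  rw [map_pathAdd p hcont, Path.Homotopic.Quotient.sigma_mk_cast]
end
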